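/- arXiv:1702.06705 — 5 statements merged into one kernel-verified Lean document; each statement's English description precedes it below -/
import Mathlib

section
/- For every n ≥ 1, the midpoint set of C_n (the n-th stage of the 1/3-Cantor construction) equals the open interval (0,1). -/
open Set MeasureTheory Filter

/-- Midpoint set of `A`. -/
def midSet (A : Set ℝ) : Set ℝ :=
  {z | ∃ x ∈ A, ∃ y ∈ A, x ≠ y ∧ z = (x + y) / 2}

/-- `cantorStage n` is the `(n+1)`-st stage `C_{n+1}` of the middle-thirds Cantor
construction, so `cantorStage 0 = C₁ = [0,1/3] ∪ [2/3,1]`. -/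
def cantorStage : ℕ → Set ℝ
  | 0 => Icc 0 (1/3) ∪ Icc (2/3) 1
  | n + 1 => (fun x => x / 3) '' cantorStage n ∪ (fun x => 2/3 + x / 3) '' cantorStage n

/-- The middle-thirds Cantor set. -/
def cantorSet' : Set ℝ := ⋂ n, cantorStage n

lemma stage_sub (n : ℕ) : cantorStage n ⊆ Icc 0 1 := by
  induction n with
  | zero =>
    intro x hx
    rcases hx with h | h <;> exact ⟨by linarith [h.1, h.2], by linarith [h.1, h.2]⟩
  | succ n ih =>
    intro x hx
    rcases hx with ⟨y, hy, rfl⟩ | ⟨y, hy, rfl⟩ <;>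
      obtain ⟨h1, h2⟩ := ih hy <;>
      exact ⟨by dsimp; linarith, by dsimp; linarith⟩

lemma mem_succ_left {n : ℕ} {x : ℝ} (hx : x ∈ cantorStage n) :
    x / 3 ∈ cantorStage (n + 1) := by
  rw [cantorStage]; exact Or.inl ⟨x, hx, rfl⟩

lemma mem_succ_right {n : ℕ} {x : ℝ} (hx : x ∈ cantorStage n) :
    2/3 + x / 3 ∈ cantorStage (n + 1) := by
  rw [cantorStage]; exact Or.inr ⟨x, hx, rfl⟩

lemma sum_surj (n : ℕ) : ∀ s ∈ Icc (0:ℝ) 2,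
    ∃ x ∈ cantorStage n, ∃ y ∈ cantorStage n, x + y = s := by
  induction n with
  | zero =>
    rintro s ⟨h0, h2⟩
    rcases le_or_gt s (2/3) with h | h
    · exact ⟨s/2, Or.inl ⟨by linarith, by linarith⟩,
        s/2, Or.inl ⟨by linarith, by linarith⟩, by ring⟩
    rcases le_or_gt s 1 with h' | h'
    · exact ⟨s - 2/3, Or.inl ⟨by linarith, by linarith⟩,
        2/3, Or.inr ⟨by linarith, by linarith⟩, by ring⟩
    rcases le_or_gt s (4/3) with h'' | h''
    · exact ⟨1/3, Or.inl ⟨by linarith, by linarith⟩,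
        s - 1/3, Or.inr ⟨by linarith, by linarith⟩, by ring⟩
    · exact ⟨s/2, Or.inr ⟨by linarith, by linarith⟩,
        s/2, Or.inr ⟨by linarith, by linarith⟩, by ring⟩
  | succ n ih =>
    rintro s ⟨h0, h2⟩
    rcases le_or_gt s (2/3) with h | h
    · obtain ⟨x, hx, y, hy, hxy⟩ := ih (3*s) ⟨by linarith, by linarith⟩
      exact ⟨x/3, mem_succ_left hx, y/3, mem_succ_left hy, by linarith⟩
    rcases le_or_gt s (4/3) with h' | h'
    · obtain ⟨x, hx, y, hy, hxy⟩ := ih (3*s - 2) ⟨by linarith, by linarith⟩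
      exact ⟨x/3, mem_succ_left hx, 2/3 + y/3, mem_succ_right hy, by linarith⟩
    · obtain ⟨x, hx, y, hy, hxy⟩ := ih (3*s - 4) ⟨by linarith, by linarith⟩
      exact ⟨2/3 + x/3, mem_succ_right hx, 2/3 + y/3, mem_succ_right hy, by linarith⟩

lemma sum_surj' (n : ℕ) : ∀ s ∈ Ioo (0:ℝ) 2,
    ∃ x ∈ cantorStage n, ∃ y ∈ cantorStage n, x ≠ y ∧ x + y = s := by
  induction n with
  | zero =>
    rintro s ⟨h0, h2⟩
    rcases le_or_gt s (1/3) with h | h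
    · exact ⟨0, Or.inl ⟨le_refl 0, by linarith⟩, s, Or.inl ⟨by linarith, by linarith⟩,
        by intro he; linarith [he], by ring⟩
    rcases lt_or_ge s (2/3) with h' | h'
    · exact ⟨s - 1/3, Or.inl ⟨by linarith, by linarith⟩,
        1/3, Or.inl ⟨by linarith, by linarith⟩, by intro he; linarith [he], by ring⟩
    rcases le_or_gt s 1 with h'' | h''
    · exact ⟨s - 2/3, Or.inl ⟨by linarith, by linarith⟩,
        2/3, Or.inr ⟨by linarith, by linarith⟩, by intro he; linarith [he], by ring⟩
    rcases le_or_gt s (4/3) with h3 | h3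
    · exact ⟨s - 1, Or.inl ⟨by linarith, by linarith⟩,
        1, Or.inr ⟨by linarith, by linarith⟩, by intro he; linarith [he], by ring⟩
    rcases le_or_gt s (5/3) with h4 | h4
    · exact ⟨2/3, Or.inr ⟨by linarith, by linarith⟩,
        s - 2/3, Or.inr ⟨by linarith, by linarith⟩, by intro he; linarith [he], by ring⟩
    · exact ⟨s - 1, Or.inr ⟨by linarith, by linarith⟩,
        1, Or.inr ⟨by linarith, by linarith⟩, by intro he; linarith [he], by ring⟩
  | succ n ih =>
    rintro s ⟨h0, h2⟩
    rcases lt_or_ge s (2/3) with h | h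
    · obtain ⟨x, hx, y, hy, hne, hxy⟩ := ih (3*s) ⟨by linarith, by linarith⟩
      refine ⟨x/3, mem_succ_left hx, y/3, mem_succ_left hy, ?_, by linarith⟩
      intro he; exact hne (by linarith [he])
    rcases le_or_gt s (4/3) with h' | h'
    · obtain ⟨x, hx, y, hy, hxy⟩ := sum_surj n (3*s - 2) ⟨by linarith, by linarith⟩
      obtain ⟨hx0, hx1⟩ := stage_sub n hx
      obtain ⟨hy0, hy1⟩ := stage_sub n hy
      refine ⟨x/3, mem_succ_left hx, 2/3 + y/3, mem_succ_right hy, ?_, by linarith⟩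
      intro he; linarith [he]
    · obtain ⟨x, hx, y, hy, hne, hxy⟩ := ih (3*s - 4) ⟨by linarith, by linarith⟩
      refine ⟨2/3 + x/3, mem_succ_right hx, 2/3 + y/3, mem_succ_right hy, ?_, by linarith⟩
      intro he; exact hne (by linarith [he])

theorem stmt_3 (n : ℕ) : midSet (cantorStage n) = Ioo 0 1 := by
  ext z
  constructor
  · rintro ⟨x, hx, y, hy, hne, rfl⟩
    obtain ⟨hx0, hx1⟩ := stage_sub n hx
    obtain ⟨hy0, hy1⟩ := stage_sub n hy
    rcases hne.lt_or_gt with h | h <;> exact ⟨by linarith, by linarith⟩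
  · rintro ⟨h0, h1⟩
    obtain ⟨x, hx, y, hy, hne, hxy⟩ := sum_surj' n (2*z) ⟨by linarith, by linarith⟩
    exact ⟨x, hx, y, hy, hne, by linarith⟩
end

section
/- There exist sets S, B ⊆ ℝ such that S has positive Lebesgue measure, B has Lebesgue measure zero, and for every x ∈ S there exists r > 0 with both x - r ∈ B and x + r ∈ B. -/
/-!
Take `S = ℝ` and let `B` be the set of Liouville numbers, which is Lebesgue-null and residual.
For fixed `x`, the maps `r ↦ x - r` and `r ↦ x + r` are homeomorphisms, so the set of `r` with
`x - r ∈ B` and `x + r ∈ B` is residual as well; by Baire's theorem it is dense and therefore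
contains some `r > 0`.
-/

open Set MeasureTheory Filter

theorem exists_mem_open_sub_mem_add_mem_of_mem_residual {G : Type*} [TopologicalSpace G]
    [AddGroup G] [IsTopologicalAddGroup G] [BaireSpace G] {L U : Set G}
    (hL : L ∈ residual G) (hU : IsOpen U) (hU' : U.Nonempty) (x : G) :
    ∃ r ∈ U, x - r ∈ L ∧ x + r ∈ L := by
  have hsub : (x - ·) ⁻¹' L ∈ residual G := (Homeomorph.subLeft x).residual_map_eq.le hL
  have hadd : (x + ·) ⁻¹' L ∈ residual G := (Homeomorph.addLeft x).residual_map_eq.le hL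
  obtain ⟨r, ⟨hr_sub, hr_add⟩, hrU⟩ :=
    (dense_of_mem_residual (inter_mem hsub hadd)).exists_mem_open hU hU'
  exact ⟨r, hrU, hr_sub, hr_add⟩

theorem stmt_6 :
    ∃ S B : Set ℝ, 0 < volume S ∧ volume B = 0 ∧
      ∀ x ∈ S, ∃ r > (0:ℝ), x - r ∈ B ∧ x + r ∈ B :=
  ⟨univ, {x | Liouville x}, by simp, volume_setOfPred_liouville, fun x _ =>
    exists_mem_open_sub_mem_add_mem_of_mem_residual eventually_residual_liouville isOpen_Ioi
      nonempty_Ioi x⟩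
end

section
/- There exist sets S, B ⊆ ℝ such that B has Lebesgue measure zero, S has infinite Lebesgue measure, and for every x ∈ S there exists r > 0 with {x - r, x + r} ⊆ B. -/
open Set MeasureTheory Filter

/-!
The Liouville numbers form a residual Lebesgue-null subset of `ℝ`. Since `r ↦ x - r` and
`r ↦ x + r` are homeomorphisms, the set of `r` with both `x - r` and `x + r` Liouville is
residual as well, hence dense, so it contains some `r > 0`; take `S = ℝ` and `B` the Liouville
numbers.
-/

theorem Real.exists_pos_sub_mem_and_add_mem_of_mem_residual {s : Set ℝ} (hs : s ∈ residual ℝ)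
    (x : ℝ) : ∃ r > (0:ℝ), x - r ∈ s ∧ x + r ∈ s := by
  have hsub : ∀ᶠ r in residual ℝ, x - r ∈ s :=
    tendsto_residual_of_isOpenMap (Homeomorph.subLeft x).continuous
      (Homeomorph.subLeft x).isOpenMap hs
  have hadd : ∀ᶠ r in residual ℝ, x + r ∈ s :=
    tendsto_residual_of_isOpenMap (Homeomorph.addLeft x).continuous
      (Homeomorph.addLeft x).isOpenMap hs
  obtain ⟨r, hrs, hr⟩ :=
    (dense_of_mem_residual (hsub.and hadd)).exists_mem_open isOpen_Ioi nonempty_Ioi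
  exact ⟨r, hr, hrs⟩

theorem stmt_7 :
    ∃ S B : Set ℝ, volume B = 0 ∧ volume S = ⊤ ∧
      ∀ x ∈ S, ∃ r > (0:ℝ), {x - r, x + r} ⊆ B := by
  refine ⟨univ, {x | Liouville x}, volume_setOfPred_liouville, Real.volume_univ, fun x _ => ?_⟩
  obtain ⟨r, hr, hsub, hadd⟩ :=
    Real.exists_pos_sub_mem_and_add_mem_of_mem_residual eventually_residual_liouville x
  exact ⟨r, hr, insert_subset hsub (singleton_subset_iff.2 hadd)⟩
end

section
/- For every n ≥ 1, the open interval (1/3, 2/3) is contained in the midpoint set of C_{n+1}, given that the midpoint set of C_n contains (0,1). -/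
open Set MeasureTheory Filter

lemma cantorStage_subset_Icc (n : ℕ) : cantorStage n ⊆ Icc (0:ℝ) 1 := by
  induction n with
  | zero =>
    rintro x (⟨hx0, hx1⟩ | ⟨hx0, hx1⟩) <;> constructor <;> linarith
  | succ n ih =>
    rintro x (⟨y, hy, rfl⟩ | ⟨y, hy, rfl⟩) <;> obtain ⟨h0, h1⟩ := ih hy <;>
      constructor <;> simp only [] <;> linarith

theorem stmt_10 (n : ℕ) (h : Ioo (0:ℝ) 1 ⊆ midSet (cantorStage n)) :
    Ioo (1/3 : ℝ) (2/3) ⊆ midSet (cantorStage (n + 1)) := by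
  rintro z ⟨hz1, hz2⟩
  have hu : (3 * z - 1 : ℝ) ∈ Ioo (0:ℝ) 1 := ⟨by linarith, by linarith⟩
  obtain ⟨x, hx, y, hy, -, hxy⟩ := h hu
  obtain ⟨hx0, hx1⟩ := cantorStage_subset_Icc n hx
  obtain ⟨hy0, hy1⟩ := cantorStage_subset_Icc n hy
  refine ⟨x / 3, Or.inl ⟨x, hx, rfl⟩, 2/3 + y / 3, Or.inr ⟨y, hy, rfl⟩, ?_, ?_⟩
  · intro hcon; linarith
  · linarith
end

section
/- For every n ≥ 1, the set (0, 1/3) ∪ (2/3, 1) is contained in the midpoint set of C_{n+1}, assuming the midpoint set of C_n equals (0,1). -/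
open Set MeasureTheory Filter

theorem stmt_11 (n : ℕ) (h : midSet (cantorStage n) = Ioo 0 1) :
    Ioo (0:ℝ) (1/3) ∪ Ioo (2/3) 1 ⊆ midSet (cantorStage (n + 1)) := by
  rintro z (hz | hz)
  · have h3 : (3 : ℝ) * z ∈ midSet (cantorStage n) := by
      rw [h]; constructor <;> nlinarith [hz.1, hz.2]
    obtain ⟨x, hx, y, hy, hxy, hz'⟩ := h3
    refine ⟨x / 3, Or.inl ⟨x, hx, rfl⟩, y / 3, Or.inl ⟨y, hy, rfl⟩, ?_, by linarith⟩
    intro hc; apply hxy; field_simp at hc; linarith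
  · have h3 : (3 : ℝ) * (z - 2/3) ∈ midSet (cantorStage n) := by
      rw [h]; constructor <;> nlinarith [hz.1, hz.2]
    obtain ⟨x, hx, y, hy, hxy, hz'⟩ := h3
    refine ⟨2/3 + x / 3, Or.inr ⟨x, hx, rfl⟩, 2/3 + y / 3, Or.inr ⟨y, hy, rfl⟩, ?_, by linarith⟩
    intro hc; apply hxy; field_simp at hc; linarith
end
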